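/- arXiv:2105.11224 — 3 statements merged into one kernel-verified Lean document; each statement's English description precedes it below -/
import Mathlib

section
/- Every primitive, geometrically compatible random substitution has unique realisation paths. -/
open Filter MeasureTheory

namespace RandomSubstitutionTheory

variable {A : Type*} [Fintype A] [DecidableEq A]

/-- The set of realisations of `ϑ(u)` for a word `u`. -/
def reals (θ : A → Finset (List A)) : List A → Finset (List A)
  | [] => {[]}
  | a :: u => (θ a).biUnion fun v => (reals θ u).image fun w => v ++ w

/-- The set of realisations of `ϑ^n(u)` for a word `u`. -/
def realsIter (θ : A → Finset (List A)) : ℕ → List A → Finset (List A)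
  | 0, u => {u}
  | n + 1, u => (reals θ u).biUnion fun v => realsIter θ n v

/-- `wordProb θ P u w` is the probability `P[ϑ_P(u) = w]`, each letter of `u` being
substituted independently. -/
noncomputable def wordProb (θ : A → Finset (List A)) (P : A → List A → ℝ) :
    List A → List A → ℝ
  | [], w => if w = [] then 1 else 0
  | a :: u, w =>
      ∑ v ∈ θ a, P a v * (if v <+: w then wordProb θ P u (w.drop v.length) else 0)

/-- `iterProb θ P n u w` is the probability `P[ϑ_P^n(u) = w]` of the induced Markov chain. -/
noncomputable def iterProb (θ : A → Finset (List A)) (P : A → List A → ℝ) :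
    ℕ → List A → List A → ℝ
  | 0, u, w => if u = w then 1 else 0
  | n + 1, u, w => ∑ v ∈ reals θ u, wordProb θ P u v * iterProb θ P n v w

/-- The substitution matrix `M_{ij} = E[|ϑ_P(a_j)|_{a_i}]`. -/
noncomputable def substM (θ : A → Finset (List A)) (P : A → List A → ℝ) :
    Matrix A A ℝ :=
  Matrix.of fun i j => ∑ w ∈ θ j, P j w * (w.count i : ℝ)

/-- The defining data of a random substitution: nonempty finite sets of nonempty words
and strictly positive probability vectors. -/
def IsRandomSubstitution (θ : A → Finset (List A)) (P : A → List A → ℝ) : Prop :=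
  (∀ a, (θ a).Nonempty) ∧ (∀ a, ∀ w ∈ θ a, w ≠ []) ∧
    (∀ a, ∀ w ∈ θ a, 0 < P a w) ∧ (∀ a w, w ∉ θ a → P a w = 0) ∧
    ∀ a, ∑ w ∈ θ a, P a w = 1

/-- Primitivity of the substitution matrix: some power has strictly positive entries. -/
def IsPrimitive (θ : A → Finset (List A)) (P : A → List A → ℝ) : Prop :=
  ∃ k : ℕ, ∀ i j : A, 0 < (substM θ P ^ k) i j

/-- The Perron–Frobenius eigenvalue is `> 1` (witnessed by a positive right eigenvector). -/
def IsExpanding (θ : A → Finset (List A)) (P : A → List A → ℝ) : Prop :=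
  ∃ lam : ℝ, 1 < lam ∧ ∃ R : A → ℝ, (∀ a, 0 < R a) ∧ (substM θ P).mulVec R = lam • R

/-- A word is legal if it occurs as a subword of some level-`k` inflation word. -/
def Legal (θ : A → Finset (List A)) (u : List A) : Prop :=
  ∃ (a : A) (k : ℕ) (w : List A), w ∈ realsIter θ k [a] ∧ u <:+: w

/-- All words of length `n` over the alphabet. -/
def allWords (A : Type*) [Fintype A] [DecidableEq A] (n : ℕ) : Finset (List A) :=
  (Finset.univ : Finset (Fin n → A)).image List.ofFn

/-- All legal words of length `n`. -/
noncomputable def legalWords (θ : A → Finset (List A)) (n : ℕ) : Finset (List A) :=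
  letI := Classical.decPred (Legal θ)
  (allWords A n).filter (Legal θ)

/-- The left shift on bi-infinite sequences. -/
def shift : (ℤ → A) → ℤ → A := fun x i => x (i + 1)

/-- The finite word of length `n` read off a bi-infinite sequence starting at position `m`. -/
def window (x : ℤ → A) (m : ℤ) (n : ℕ) : List A :=
  (List.range n).map fun t => x (m + (t : ℤ))

/-- The random substitution subshift `X_ϑ`. -/
def Xtheta (θ : A → Finset (List A)) : Set (ℤ → A) :=
  {x | ∀ (m : ℤ) (n : ℕ), Legal θ (window x m n)}

/-- The cylinder set of the word `v` at position `m`. -/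
def cylinder (v : List A) (m : ℤ) : Set (ℤ → A) :=
  {x | window x m v.length = v}

/-- The number `|w|_v` of (possibly overlapping) occurrences of `v` in `w`. -/
def occCount (v w : List A) : ℕ :=
  ((List.range w.length).filter fun i => decide (v <+: w.drop i)).length

/-- Expected length `E[|ϑ_P^k(a)|]`. -/
noncomputable def expLen (θ : A → Finset (List A)) (P : A → List A → ℝ)
    (k : ℕ) (a : A) : ℝ :=
  ∑ w ∈ realsIter θ k [a], iterProb θ P k [a] w * (w.length : ℝ)

/-- Expected number of occurrences `E[|ϑ_P^k(a)|_v]`. -/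
noncomputable def expCount (θ : A → Finset (List A)) (P : A → List A → ℝ)
    (k : ℕ) (a : A) (v : List A) : ℝ :=
  ∑ w ∈ realsIter θ k [a], iterProb θ P k [a] w * (occCount v w : ℝ)

/-- `μ` is the frequency measure of `(ϑ, P)`: a shift-invariant Borel probability measure
supported on `X_ϑ` whose cylinder values are the expected word frequencies. -/
def IsFrequencyMeasure [MeasurableSpace A] (θ : A → Finset (List A))
    (P : A → List A → ℝ) (μ : Measure (ℤ → A)) : Prop :=
  IsProbabilityMeasure μ ∧
    (∀ s : Set (ℤ → A), MeasurableSet s → μ (shift ⁻¹' s) = μ s) ∧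
    μ (Xtheta θ) = 1 ∧
    ∀ v : List A, Legal θ v → ∀ (m : ℤ) (a : A),
      Tendsto (fun k : ℕ => expCount θ P k a v / expLen θ P k a) atTop
        (nhds ((μ (cylinder v m)).toReal))

/-- The `n`-th entropy sum `∑_{u ∈ L_ϑ^n} -μ[u] log μ[u]`. -/
noncomputable def entropySeq [MeasurableSpace A] (θ : A → Finset (List A))
    (μ : Measure (ℤ → A)) (n : ℕ) : ℝ :=
  ∑ u ∈ legalWords θ n, Real.negMulLog ((μ (cylinder u 0)).toReal)

/-- The measure-theoretic (Kolmogorov–Sinai) entropy of the shift with respect to `μ`,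
computed along cylinder partitions. -/
noncomputable def measEntropy [MeasurableSpace A] (θ : A → Finset (List A))
    (μ : Measure (ℤ → A)) : ℝ :=
  limsup (fun n : ℕ => entropySeq θ μ n / (n : ℝ)) atTop

/-- The topological entropy of the subshift `X_ϑ`. -/
noncomputable def topEntropy (θ : A → Finset (List A)) : ℝ :=
  limsup (fun n : ℕ => Real.log ((legalWords θ n).card) / (n : ℝ)) atTop

/-- The entropy vector `H_{k,a} = H(ϑ_P^k(a))`. -/
noncomputable def Hvec (θ : A → Finset (List A)) (P : A → List A → ℝ)
    (k : ℕ) (a : A) : ℝ :=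
  ∑ w ∈ realsIter θ k [a], Real.negMulLog (iterProb θ P k [a] w)

/-- The inner product `H_k^T R`. -/
noncomputable def HdotR (θ : A → Finset (List A)) (P : A → List A → ℝ)
    (R : A → ℝ) (k : ℕ) : ℝ :=
  ∑ a, Hvec θ P k a * R a

/-- Binary entropy `H(p) = -p log p - (1-p) log (1-p)`. -/
noncomputable def binEnt (p : ℝ) : ℝ := Real.negMulLog p + Real.negMulLog (1 - p)

/-- Unique realisation paths: concatenation of level-`k` inflation words of the letters of a
legal word is injective. -/
def UniqueRealisationPaths (θ : A → Finset (List A)) : Prop :=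
  ∀ v : List A, Legal θ v → ∀ k : ℕ, ∀ f g : Fin v.length → List A,
    (∀ i, f i ∈ realsIter θ k [v.get i]) → (∀ i, g i ∈ realsIter θ k [v.get i]) →
      (List.ofFn f).flatten = (List.ofFn g).flatten → f = g

/-- The disjoint set condition. -/
def DisjointSetCondition (θ : A → Finset (List A)) : Prop :=
  ∀ (a : A) (k : ℕ), ∀ u ∈ θ a, ∀ v ∈ θ a, u ≠ v →
    ∀ w, w ∈ realsIter θ k u → w ∉ realsIter θ k v

/-- The identical set condition. -/
def IdenticalSetCondition (θ : A → Finset (List A)) : Prop :=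
  ∀ (a : A) (k : ℕ), ∀ u ∈ θ a, ∀ v ∈ θ a, realsIter θ k u = realsIter θ k v

/-- Identical production probabilities. -/
def IdenticalProductionProbabilities (θ : A → Finset (List A))
    (P : A → List A → ℝ) : Prop :=
  ∀ a : A, ∀ u ∈ θ a, ∀ v ∈ θ a, ∀ (k : ℕ) (w : List A),
    iterProb θ P k u w = iterProb θ P k v w

/-- The disjoint set condition for the `k`-th power `ϑ^k`. -/
def DisjointSetConditionPow (θ : A → Finset (List A)) (k : ℕ) : Prop :=
  ∀ (a : A) (j : ℕ), ∀ u ∈ realsIter θ k [a], ∀ v ∈ realsIter θ k [a], u ≠ v →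
    ∀ w, w ∈ realsIter θ (k * j) u → w ∉ realsIter θ (k * j) v

/-- The identical set condition for the `k`-th power `ϑ^k`. -/
def IdenticalSetConditionPow (θ : A → Finset (List A)) (k : ℕ) : Prop :=
  ∀ (a : A) (j : ℕ), ∀ u ∈ realsIter θ k [a], ∀ v ∈ realsIter θ k [a],
    realsIter θ (k * j) u = realsIter θ (k * j) v

/-- Identical production probabilities for the `k`-th power `ϑ^k`. -/
def IdenticalProductionProbabilitiesPow (θ : A → Finset (List A))
    (P : A → List A → ℝ) (k : ℕ) : Prop :=
  ∀ a : A, ∀ u ∈ realsIter θ k [a], ∀ v ∈ realsIter θ k [a], ∀ (j : ℕ) (w : List A),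
    iterProb θ P (k * j) u w = iterProb θ P (k * j) v w

/-- Compatibility: all realisations of a letter have the same abelianisation. -/
def Compatible (θ : A → Finset (List A)) : Prop :=
  ∀ a : A, ∀ u ∈ θ a, ∀ v ∈ θ a, ∀ b : A, u.count b = v.count b

/-- Constant length `ℓ ≥ 2`. -/
def ConstantLength (θ : A → Finset (List A)) (ℓ : ℕ) : Prop :=
  2 ≤ ℓ ∧ ∀ a : A, ∀ w ∈ θ a, w.length = ℓ

/-- The set `ϑ(y)` of bi-infinite sequences obtained by substituting each letter of `y`,
with the image of `y 0` beginning at position `0`. -/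
def substSeq (θ : A → Finset (List A)) (y : ℤ → A) : Set (ℤ → A) :=
  {x | ∃ v : ℤ → List A, (∀ j, v j ∈ θ (y j)) ∧
    ∃ p : ℤ → ℤ, p 0 = 0 ∧ (∀ j, p (j + 1) = p j + (v j).length) ∧
      ∀ (j : ℤ) (t : ℕ) (ht : t < (v j).length), x (p j + (t : ℤ)) = (v j).get ⟨t, ht⟩}

/-- `ϑ(X)` for a set of bi-infinite sequences. -/
def substImage (θ : A → Finset (List A)) (X : Set (ℤ → A)) : Set (ℤ → A) :=
  ⋃ y ∈ X, substSeq θ y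

/-- The set `ϑ^m(y)` of bi-infinite sequences. -/
def substSeqPow (θ : A → Finset (List A)) : ℕ → (ℤ → A) → Set (ℤ → A)
  | 0, y => {y}
  | m + 1, y => ⋃ z ∈ substSeq θ y, substSeqPow θ m z

/-- The maximal length of an inflation word of the letter `a` (equals the common length
when lengths are well-defined). -/
def maxLen (θ : A → Finset (List A)) (a : A) : ℕ := (θ a).sup List.length

/-- Recognisability: every `x ∈ X_ϑ` has a unique inflation-word decomposition. -/
def Recognisable (θ : A → Finset (List A)) : Prop :=
  ∀ x ∈ Xtheta θ, ∃! p : (ℤ → A) × ℕ,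
    p.1 ∈ Xtheta θ ∧ p.2 < maxLen θ (p.1 0) ∧
      (fun i => x (i - (p.2 : ℤ))) ∈ substSeq θ p.1

/-- Recognisability of the `m`-th power of a constant length-`ℓ` substitution. -/
def RecognisablePow (θ : A → Finset (List A)) (m ℓ : ℕ) : Prop :=
  ∀ x ∈ Xtheta θ, ∃! p : (ℤ → A) × ℕ,
    p.1 ∈ Xtheta θ ∧ p.2 < ℓ ^ m ∧
      (fun i => x (i - (p.2 : ℤ))) ∈ substSeqPow θ m p.1

/-- The set `ϑ^m([a])` of exact images of sequences in the cylinder `[a] ⊆ X_ϑ`. -/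
def inflCylPow (θ : A → Finset (List A)) (m : ℕ) (a : A) : Set (ℤ → A) :=
  ⋃ y ∈ {w ∈ Xtheta θ | w 0 = a}, substSeqPow θ m y

/-- `r` is a radius of local recognisability for `ϑ^m`. -/
def RecogPropPow (θ : A → Finset (List A)) (m r : ℕ) : Prop :=
  ∀ (a : A) (x : ℤ → A), x ∈ inflCylPow θ m a → ∀ y ∈ Xtheta θ,
    (∀ t : ℤ, -(r : ℤ) ≤ t → t ≤ (r : ℤ) → x t = y t) → y ∈ inflCylPow θ m a

/-- The recognisability radius `κ(ϑ^m)`. -/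
noncomputable def recogRadiusPow (θ : A → Finset (List A)) (m : ℕ) : ℕ :=
  sInf {r | RecogPropPow θ m r}

/-- The recognisability radius `κ(ϑ)`. -/
noncomputable def recogRadius (θ : A → Finset (List A)) : ℕ := recogRadiusPow θ 1

/-- The random word `ϑ_P^n(a)` is (a.s.) completely determined by `ϑ_P^{n+k}(a)`
in the Markov chain. -/
def DeterminedBy (θ : A → Finset (List A)) (P : A → List A → ℝ)
    (a : A) (n k : ℕ) : Prop :=
  ∀ v₁ v₂ w : List A, v₁ ∈ realsIter θ n [a] → v₂ ∈ realsIter θ n [a] →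
    0 < iterProb θ P n [a] v₁ * iterProb θ P k v₁ w →
      0 < iterProb θ P n [a] v₂ * iterProb θ P k v₂ w → v₁ = v₂

/-- The random words `ϑ_P^n(a)` and `ϑ_P^{n+k}(a)` are independent in the Markov chain. -/
def IndepSteps (θ : A → Finset (List A)) (P : A → List A → ℝ)
    (a : A) (n k : ℕ) : Prop :=
  ∀ v w : List A,
    iterProb θ P n [a] v * iterProb θ P k v w =
      iterProb θ P n [a] v * iterProb θ P (n + k) [a] w

/-- The substitution matrix of a marginal (deterministic) substitution. -/
def marginalM (ρ : A → List A) : Matrix A A ℝ :=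
  Matrix.of fun i j => ((ρ j).count i : ℝ)

/-- Geometric compatibility: a single positive left eigenvector with eigenvalue `λ > 1`
for all marginals. -/
def GeometricallyCompatible (θ : A → Finset (List A)) : Prop :=
  ∃ lam : ℝ, 1 < lam ∧ ∃ L : A → ℝ, (∀ a, 0 < L a) ∧
    ∀ ρ : A → List A, (∀ a, ρ a ∈ θ a) → Matrix.vecMul L (marginalM ρ) = lam • L


/-- Geometric weight of a word. -/
noncomputable def Lw (L : A → ℝ) (w : List A) : ℝ := (w.map L).sum

lemma Lw_nonneg (L : A → ℝ) (hL : ∀ a, 0 < L a) (w : List A) : 0 ≤ Lw L w := by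
  apply List.sum_nonneg
  intro x hx
  obtain ⟨a, _, rfl⟩ := List.mem_map.mp hx
  exact (hL a).le

lemma Lw_eq_zero (L : A → ℝ) (hL : ∀ a, 0 < L a) (w : List A)
    (h : Lw L w = 0) : w = [] := by
  cases w with
  | nil => rfl
  | cons a w =>
    exfalso
    have h1 : Lw L (a :: w) = L a + Lw L w := by simp [Lw]
    have h2 := Lw_nonneg L hL w
    have := hL a
    linarith [h1 ▸ h]

lemma Lw_append (L : A → ℝ) (x y : List A) :
    Lw L (x ++ y) = Lw L x + Lw L y := by simp [Lw]

lemma eq_of_prefix_of_Lw_eq (L : A → ℝ) (hL : ∀ a, 0 < L a) {x y : List A}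
    (h : x <+: y) (he : Lw L x = Lw L y) : x = y := by
  obtain ⟨r, rfl⟩ := h
  have h1 : Lw L (x ++ r) = Lw L x + Lw L r := Lw_append L x r
  have hr : Lw L r = 0 := by linarith [h1 ▸ he.symm]
  rw [Lw_eq_zero L hL r hr, List.append_nil]

lemma Lw_eq_sum_count (L : A → ℝ) (w : List A) :
    Lw L w = ∑ i, (w.count i : ℝ) * L i := by
  induction w with
  | nil => simp [Lw]
  | cons a w ih =>
    have h1 : Lw L (a :: w) = L a + Lw L w := by simp [Lw]
    rw [h1, ih]
    have : ∀ i : A, ((a :: w).count i : ℝ) * L i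
        = (w.count i : ℝ) * L i + (if i = a then L i else 0) := by
      intro i
      rw [List.count_cons]
      push_cast
      rcases eq_or_ne i a with h | h
      · subst h; simp; ring
      · simp [h, Ne.symm h]
    rw [Finset.sum_congr rfl fun i _ => this i, Finset.sum_add_distrib,
      Finset.sum_ite_eq' Finset.univ a L]
    simp [add_comm]

lemma flatten_inj_of_Lw (L : A → ℝ) (hL : ∀ a, 0 < L a) :
    ∀ xs ys : List (List A),
      List.Forall₂ (fun x y => Lw L x = Lw L y) xs ys →
        xs.flatten = ys.flatten → xs = ys := by
  intro xs ys h
  induction h with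
  | nil => intro _; rfl
  | @cons x y xs ys hxy h ih =>
    intro hf
    simp only [List.flatten_cons] at hf
    have hx : x <+: (x ++ xs.flatten) := List.prefix_append _ _
    have hy : y <+: (x ++ xs.flatten) := hf ▸ List.prefix_append _ _
    have hxey : x = y := by
      rcases List.prefix_or_prefix_of_prefix hx hy with hp | hp
      · exact eq_of_prefix_of_Lw_eq L hL hp hxy
      · exact (eq_of_prefix_of_Lw_eq L hL hp hxy.symm).symm
    subst hxey
    have : xs.flatten = ys.flatten := by
      exact List.append_cancel_left hf
    rw [ih this]

theorem statement7 {A : Type*} [Fintype A] [DecidableEq A]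
    (θ : A → Finset (List A)) (P : A → List A → ℝ)
    (hRS : IsRandomSubstitution θ P) (hprim : IsPrimitive θ P)
    (hgc : GeometricallyCompatible θ) :
    UniqueRealisationPaths θ := by
  classical
  obtain ⟨lam, hlam, L, hLpos, hmarg⟩ := hgc
  -- every realisation of a letter has weight lam * L a
  have hlet : ∀ a : A, ∀ v ∈ θ a, Lw L v = lam * L a := by
    intro a v hv
    set ρ : A → List A := fun b => if b = a then v else (hRS.1 b).choose with hρ
    have hρmem : ∀ b, ρ b ∈ θ b := by
      intro b
      by_cases hb : b = a
      · subst hb; simpa [hρ] using hv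
      · simpa [hρ, hb] using (hRS.1 b).choose_spec
    have hev := congrFun (hmarg ρ hρmem) a
    have hvm : Matrix.vecMul L (marginalM ρ) a = ∑ i, L i * ((ρ a).count i : ℝ) := by
      simp [Matrix.vecMul, dotProduct, marginalM]
    have hρa : ρ a = v := by simp [hρ]
    rw [hvm, hρa] at hev
    have : Lw L v = ∑ i, L i * ((v).count i : ℝ) := by
      rw [Lw_eq_sum_count]
      exact Finset.sum_congr rfl fun i _ => mul_comm _ _
    rw [this, hev]
    simp [Pi.smul_apply, smul_eq_mul]
  have hreals : ∀ u : List A, ∀ w ∈ reals θ u, Lw L w = lam * Lw L u := by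
    intro u
    induction u with
    | nil =>
      intro w hw
      simp only [reals, Finset.mem_singleton] at hw
      subst hw; simp [Lw]
    | cons a u ih =>
      intro w hw
      simp only [reals, Finset.mem_biUnion, Finset.mem_image] at hw
      obtain ⟨v, hv, w', hw', rfl⟩ := hw
      have h1 : Lw L (a :: u) = L a + Lw L u := by simp [Lw]
      rw [Lw_append, hlet a v hv, ih w' hw', h1]
      ring
  have hiter : ∀ (k : ℕ) (u : List A), ∀ w ∈ realsIter θ k u,
      Lw L w = lam ^ k * Lw L u := by
    intro k
    induction k with
    | zero =>
      intro u w hw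
      simp only [realsIter, Finset.mem_singleton] at hw
      subst hw; simp
    | succ k ih =>
      intro u w hw
      simp only [realsIter, Finset.mem_biUnion] at hw
      obtain ⟨v, hv, hw⟩ := hw
      rw [ih v w hw, hreals u v hv]
      ring
  intro v _ k f g hf hg hflat
  have hF : List.Forall₂ (fun x y => Lw L x = Lw L y) (List.ofFn f) (List.ofFn g) := by
    rw [List.forall₂_iff_get]
    refine ⟨by simp, ?_⟩
    intro i h1 h2
    simp only [List.length_ofFn] at h1 h2
    have e1 : (List.ofFn f).get ⟨i, by simpa using h1⟩ = f ⟨i, h1⟩ := by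
      simp [List.get_ofFn]
    have e2 : (List.ofFn g).get ⟨i, by simpa using h2⟩ = g ⟨i, h2⟩ := by
      simp [List.get_ofFn]
    rw [e1, e2, hiter k [v.get ⟨i, h1⟩] (f ⟨i, h1⟩) (hf ⟨i, h1⟩),
      hiter k [v.get ⟨i, h2⟩] (g ⟨i, h2⟩) (hg ⟨i, h2⟩)]
  have := flatten_inj_of_Lw L hLpos (List.ofFn f) (List.ofFn g) hF hflat
  exact List.ofFn_injective this

end RandomSubstitutionTheory
end

section
/- Let ϑ_P be a primitive random substitution with substitution matrix M, Perron–Frobenius eigenvalue λ and right Perron–Frobenius eigenvector R. Then for every n, k ∈ N, H_{n+k}^T ≤ H_n^T M^k + H_k^T entrywise; in particular H_{n+k}^T R ≤ λ^k·H_n^T R + H_k^T R. If ϑ_P has unique realisation paths, then equality occurs precisely if, for every a ∈ A, the random word ϑ_P^n(a) is completely determined by ϑ_P^{n+k}(a). -/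
open Filter MeasureTheory

namespace RandomSubstitutionTheory

open Finset Real Matrix

variable {A : Type*} [DecidableEq A] {θ : A → Finset (List A)} {P : A → List A → ℝ}

/-! ### Realisations -/

lemma mem_reals_nil {x : List A} : x ∈ reals θ [] ↔ x = [] := by simp [reals]

lemma mem_reals_cons {a : A} {u x : List A} :
    x ∈ reals θ (a :: u) ↔ ∃ s ∈ θ a, ∃ t ∈ reals θ u, x = s ++ t := by
  simp [reals, eq_comm]

lemma mem_reals_append {u u' x : List A} :
    x ∈ reals θ (u ++ u') ↔ ∃ s ∈ reals θ u, ∃ t ∈ reals θ u', x = s ++ t := by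
  induction u generalizing x with
  | nil => simp [mem_reals_nil]
  | cons a u ih =>
    simp only [List.cons_append, mem_reals_cons, ih]
    constructor
    · rintro ⟨s, hs, _, ⟨t, ht, t', ht', rfl⟩, rfl⟩
      exact ⟨s ++ t, ⟨s, hs, t, ht, rfl⟩, t', ht', by simp⟩
    · rintro ⟨_, ⟨s, hs, t, ht, rfl⟩, t', ht', rfl⟩
      exact ⟨s, hs, t ++ t', ⟨t, ht, t', ht', rfl⟩, by simp⟩

lemma reals_nonempty (hθ : ∀ a, (θ a).Nonempty) (u : List A) : (reals θ u).Nonempty := by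
  induction u with
  | nil => exact ⟨[], mem_reals_nil.2 rfl⟩
  | cons a u ih =>
    obtain ⟨s, hs⟩ := hθ a
    obtain ⟨t, ht⟩ := ih
    exact ⟨s ++ t, mem_reals_cons.2 ⟨s, hs, t, ht, rfl⟩⟩

lemma mem_realsIter_succ {n : ℕ} {u x : List A} :
    x ∈ realsIter θ (n + 1) u ↔ ∃ v ∈ reals θ u, x ∈ realsIter θ n v := by
  simp [realsIter]

lemma mem_realsIter_one_singleton {a : A} {x : List A} : x ∈ realsIter θ 1 [a] ↔ x ∈ θ a := by
  simp [realsIter, reals]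

lemma realsIter_nil (k : ℕ) : realsIter θ k ([] : List A) = {[]} := by
  induction k with
  | zero => rfl
  | succ k ih => simp [realsIter, reals, ih]

lemma mem_realsIter_add {m j : ℕ} {u x : List A} :
    x ∈ realsIter θ (m + j) u ↔ ∃ v ∈ realsIter θ m u, x ∈ realsIter θ j v := by
  induction m generalizing u with
  | zero => simp [realsIter]
  | succ m ih =>
    rw [Nat.add_right_comm, mem_realsIter_succ]
    simp only [ih, mem_realsIter_succ]
    constructor
    · rintro ⟨y, hy, v, hv, hx⟩
      exact ⟨v, ⟨y, hy, hv⟩, hx⟩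
    · rintro ⟨v, ⟨y, hy, hv⟩, hx⟩
      exact ⟨y, hy, v, hv, hx⟩

lemma realsIter_subset_add {k n : ℕ} {u v : List A} (hv : v ∈ realsIter θ k u) :
    realsIter θ n v ⊆ realsIter θ (k + n) u :=
  fun _ hx => mem_realsIter_add.2 ⟨v, hv, hx⟩

lemma realsIter_nonempty (hθ : ∀ a, (θ a).Nonempty) (k : ℕ) (u : List A) :
    (realsIter θ k u).Nonempty := by
  induction k generalizing u with
  | zero => exact ⟨u, mem_singleton_self u⟩
  | succ k ih =>
    obtain ⟨v, hv⟩ := reals_nonempty hθ u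
    obtain ⟨w, hw⟩ := ih v
    exact ⟨w, mem_realsIter_succ.2 ⟨v, hv, hw⟩⟩

lemma mem_realsIter_append {k : ℕ} {u u' x : List A} :
    x ∈ realsIter θ k (u ++ u') ↔
      ∃ s ∈ realsIter θ k u, ∃ t ∈ realsIter θ k u', x = s ++ t := by
  induction k generalizing u u' x with
  | zero => simp [realsIter]
  | succ k ih =>
    simp only [mem_realsIter_succ, mem_reals_append]
    constructor
    · rintro ⟨_, ⟨c, hc, d, hd, rfl⟩, hx⟩
      obtain ⟨s, hs, t, ht, rfl⟩ := ih.1 hx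
      exact ⟨s, ⟨c, hc, hs⟩, t, ⟨d, hd, ht⟩, rfl⟩
    · rintro ⟨s, ⟨c, hc, hs⟩, t, ⟨d, hd, ht⟩, rfl⟩
      exact ⟨c ++ d, ⟨c, hc, d, hd, rfl⟩, ih.2 ⟨s, hs, t, ht, rfl⟩⟩

lemma append_mem_realsIter {k : ℕ} {u u' s t : List A} (hs : s ∈ realsIter θ k u)
    (ht : t ∈ realsIter θ k u') : s ++ t ∈ realsIter θ k (u ++ u') :=
  mem_realsIter_append.2 ⟨s, hs, t, ht, rfl⟩

lemma mem_realsIter_iff_forall₂ {k : ℕ} {u x : List A} :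
    x ∈ realsIter θ k u ↔
      ∃ ws, List.Forall₂ (fun c y => y ∈ realsIter θ k [c]) u ws ∧ x = ws.flatten := by
  induction u generalizing x with
  | nil => simp [realsIter_nil]
  | cons a u ih =>
    rw [← List.singleton_append, mem_realsIter_append]
    constructor
    · rintro ⟨s, hs, t, ht, rfl⟩
      obtain ⟨ws, hws, rfl⟩ := ih.1 ht
      exact ⟨s :: ws, .cons hs hws, rfl⟩
    · rintro ⟨_, hws, rfl⟩
      obtain _ | ⟨hs, hws⟩ := hws
      exact ⟨_, hs, _, ih.2 ⟨_, hws, rfl⟩, rfl⟩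

lemma legal_of_mem_realsIter {k : ℕ} {a : A} {v : List A} (h : v ∈ realsIter θ k [a]) :
    Legal θ v :=
  ⟨a, k, v, h, List.infix_refl v⟩

lemma Legal.of_infix {u v : List A} (hv : Legal θ v) (hu : u <:+: v) : Legal θ u := by
  obtain ⟨a, k, w, hw, hvw⟩ := hv
  exact ⟨a, k, w, hw, hu.trans hvw⟩

lemma UniqueRealisationPaths.forall₂_eq (hU : UniqueRealisationPaths θ) {v : List A}
    (hv : Legal θ v) (k : ℕ) {ws₁ ws₂ : List (List A)}
    (h₁ : List.Forall₂ (fun c y => y ∈ realsIter θ k [c]) v ws₁)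
    (h₂ : List.Forall₂ (fun c y => y ∈ realsIter θ k [c]) v ws₂)
    (hfl : ws₁.flatten = ws₂.flatten) : ws₁ = ws₂ := by
  obtain ⟨hl₁, hg₁⟩ := List.forall₂_iff_get.1 h₁
  obtain ⟨hl₂, hg₂⟩ := List.forall₂_iff_get.1 h₂
  have hofFn : ∀ (ws : List (List A)) (hl : v.length = ws.length),
      List.ofFn (fun i : Fin v.length => ws.get (i.cast hl)) = ws := fun ws hl =>
    List.ext_get (by simp [hl]) fun i _ _ => by simp
  have := hU v hv k (fun i => ws₁.get (i.cast hl₁)) (fun i => ws₂.get (i.cast hl₂))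
    (fun i => hg₁ i i.2 _) (fun i => hg₂ i i.2 _) (by rw [hofFn ws₁ hl₁, hofFn ws₂ hl₂, hfl])
  rw [← hofFn ws₁ hl₁, ← hofFn ws₂ hl₂, this]

lemma UniqueRealisationPaths.append_inj (hU : UniqueRealisationPaths θ) {u u' : List A}
    (hL : Legal θ (u ++ u')) (k : ℕ) {s s' t t' : List A}
    (hs : s ∈ realsIter θ k u) (hs' : s' ∈ realsIter θ k u)
    (ht : t ∈ realsIter θ k u') (ht' : t' ∈ realsIter θ k u')
    (h : s ++ t = s' ++ t') : s = s' ∧ t = t' := by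
  obtain ⟨xs, hxs, rfl⟩ := mem_realsIter_iff_forall₂.1 hs
  obtain ⟨xs', hxs', rfl⟩ := mem_realsIter_iff_forall₂.1 hs'
  obtain ⟨ys, hys, rfl⟩ := mem_realsIter_iff_forall₂.1 ht
  obtain ⟨ys', hys', rfl⟩ := mem_realsIter_iff_forall₂.1 ht'
  have hlen : xs.length = xs'.length := hxs.length_eq.symm.trans hxs'.length_eq
  have := hU.forall₂_eq hL k (List.rel_append hxs hys) (List.rel_append hxs' hys')
    (by simpa using h)
  obtain ⟨rfl, rfl⟩ := List.append_inj this hlen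
  exact ⟨rfl, rfl⟩

/-! ### Probabilities and expectations -/

lemma IsRandomSubstitution.nonneg (hRS : IsRandomSubstitution θ P) (a : A) (w : List A) :
    0 ≤ P a w := by
  by_cases hw : w ∈ θ a
  · exact (hRS.2.2.1 a w hw).le
  · exact (hRS.2.2.2.1 a w hw).ge

lemma wordProb_nonneg (hP : ∀ a w, 0 ≤ P a w) : ∀ u w : List A, 0 ≤ wordProb θ P u w
  | [], w => by unfold wordProb; split <;> norm_num
  | a :: u, w => by
    unfold wordProb
    refine sum_nonneg fun v _ => mul_nonneg (hP a v) ?_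
    split
    exacts [wordProb_nonneg hP u _, le_rfl]

lemma iterProb_nonneg (hP : ∀ a w, 0 ≤ P a w) : ∀ (n : ℕ) (u w : List A),
    0 ≤ iterProb θ P n u w
  | 0, u, w => by unfold iterProb; split <;> norm_num
  | n + 1, u, w => sum_nonneg fun v _ =>
    mul_nonneg (wordProb_nonneg hP u v) (iterProb_nonneg hP n v w)

lemma wordProb_eq_zero : ∀ {u w : List A}, w ∉ reals θ u → wordProb θ P u w = 0
  | [], w, h => by rw [mem_reals_nil] at h; simp [wordProb, h]
  | a :: u, w, h => by
    unfold wordProb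
    refine sum_eq_zero fun v hv => ?_
    split_ifs with hpre
    · obtain ⟨t, rfl⟩ := hpre
      rw [List.drop_left, wordProb_eq_zero fun ht => h (mem_reals_cons.2 ⟨v, hv, t, ht, rfl⟩),
        mul_zero]
    · rw [mul_zero]

lemma iterProb_eq_zero : ∀ {n : ℕ} {u w : List A}, w ∉ realsIter θ n u →
    iterProb θ P n u w = 0
  | 0, u, w, h => by simp_all [iterProb, realsIter, eq_comm]
  | n + 1, u, w, h => sum_eq_zero fun v hv => by
    rw [iterProb_eq_zero fun hw => h (mem_realsIter_succ.2 ⟨v, hv, hw⟩), mul_zero]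

lemma mem_realsIter_of_iterProb_ne_zero {n : ℕ} {u w : List A}
    (h : iterProb θ P n u w ≠ 0) : w ∈ realsIter θ n u :=
  not_not.1 (mt iterProb_eq_zero h)

lemma wordProb_pos (hP : ∀ a w, 0 ≤ P a w) (hPpos : ∀ a, ∀ w ∈ θ a, 0 < P a w) :
    ∀ {u w : List A}, w ∈ reals θ u → 0 < wordProb θ P u w
  | [], w, h => by rw [mem_reals_nil] at h; simp [wordProb, h]
  | a :: u, _, h => by
    obtain ⟨s, hs, t, ht, rfl⟩ := mem_reals_cons.1 h
    unfold wordProb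
    refine sum_pos' (fun v _ => mul_nonneg (hP a v) ?_) ⟨s, hs, ?_⟩
    · split
      exacts [wordProb_nonneg hP u _, le_rfl]
    · rw [if_pos (List.prefix_append s t), List.drop_left]
      exact mul_pos (hPpos a s hs) (wordProb_pos hP hPpos ht)

lemma iterProb_pos (hP : ∀ a w, 0 ≤ P a w) (hPpos : ∀ a, ∀ w ∈ θ a, 0 < P a w) :
    ∀ {n : ℕ} {u w : List A}, w ∈ realsIter θ n u → 0 < iterProb θ P n u w
  | 0, u, w, h => by simp_all [iterProb, realsIter]
  | n + 1, u, w, h => by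
    obtain ⟨v, hv, hw⟩ := mem_realsIter_succ.1 h
    refine sum_pos' (fun v' _ => mul_nonneg (wordProb_nonneg hP u v')
      (iterProb_nonneg hP n v' w)) ⟨v, hv, ?_⟩
    exact mul_pos (wordProb_pos hP hPpos hv) (iterProb_pos hP hPpos hw)

lemma iterProb_nil (n : ℕ) : iterProb θ P n [] [] = 1 := by
  induction n with
  | zero => simp [iterProb]
  | succ n ih => simp [iterProb, reals, wordProb, ih]

noncomputable def wordExp (θ : A → Finset (List A)) (P : A → List A → ℝ) (u : List A)
    (F : List A → ℝ) : ℝ :=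
  ∑ w ∈ reals θ u, wordProb θ P u w * F w

noncomputable def iterExp (θ : A → Finset (List A)) (P : A → List A → ℝ) (k : ℕ)
    (u : List A) (F : List A → ℝ) : ℝ :=
  ∑ w ∈ realsIter θ k u, iterProb θ P k u w * F w

lemma wordExp_nil (F : List A → ℝ) : wordExp θ P [] F = F [] := by
  simp [wordExp, reals, wordProb]

lemma wordExp_cons (a : A) (u : List A) (F : List A → ℝ) :
    wordExp θ P (a :: u) F = ∑ s ∈ θ a, P a s * wordExp θ P u (fun t => F (s ++ t)) := by
  have key : ∀ s ∈ θ a, ∑ y ∈ reals θ (a :: u),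
      (if s <+: y then wordProb θ P u (y.drop s.length) else 0) * F y =
        wordExp θ P u (fun t => F (s ++ t)) := by
    intro s hs
    have himg : (reals θ u).image (s ++ ·) ⊆ reals θ (a :: u) := by
      intro y hy
      obtain ⟨t, ht, rfl⟩ := mem_image.1 hy
      exact mem_reals_cons.2 ⟨s, hs, t, ht, rfl⟩
    rw [← sum_subset himg, sum_image fun _ _ _ _ h => List.append_cancel_left h]
    · simp [wordExp]
    · intro y _ hy
      split_ifs with hpre
      · obtain ⟨t, rfl⟩ := hpre
        rw [List.drop_left, wordProb_eq_zero fun ht => hy (mem_image.2 ⟨t, ht, rfl⟩),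
          zero_mul]
      · rw [zero_mul]
  rw [wordExp]
  simp only [wordProb, sum_mul]
  rw [sum_comm]
  refine sum_congr rfl fun s hs => ?_
  rw [← key s hs, mul_sum]
  exact sum_congr rfl fun y _ => mul_assoc _ _ _

lemma wordExp_append (u u' : List A) (F : List A → ℝ) :
    wordExp θ P (u ++ u') F = wordExp θ P u (fun s => wordExp θ P u' (fun t => F (s ++ t))) := by
  induction u generalizing F with
  | nil => simp [wordExp_nil]
  | cons a u ih => simp only [List.cons_append, wordExp_cons, ih, List.append_assoc]

lemma iterExp_zero (u : List A) (F : List A → ℝ) : iterExp θ P 0 u F = F u := by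
  simp [iterExp, realsIter, iterProb]

lemma iterExp_nil (k : ℕ) (F : List A → ℝ) : iterExp θ P k [] F = F [] := by
  simp [iterExp, realsIter_nil, iterProb_nil]

lemma iterExp_succ (k : ℕ) (u : List A) (F : List A → ℝ) :
    iterExp θ P (k + 1) u F = wordExp θ P u (fun v => iterExp θ P k v F) := by
  simp only [iterExp, wordExp, iterProb, sum_mul, mul_sum]
  rw [sum_comm]
  refine sum_congr rfl fun v hv => (sum_subset (fun w hw => mem_realsIter_succ.2 ⟨v, hv, hw⟩)
    fun w _ hw => ?_).symm.trans (sum_congr rfl fun w _ => mul_assoc _ _ _)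
  rw [iterProb_eq_zero hw, mul_zero, zero_mul]

lemma iterExp_add (m j : ℕ) (u : List A) (F : List A → ℝ) :
    iterExp θ P (m + j) u F = iterExp θ P m u (fun v => iterExp θ P j v F) := by
  induction m generalizing u with
  | zero => rw [Nat.zero_add, iterExp_zero]
  | succ m ih => simp only [Nat.add_right_comm m 1 j, iterExp_succ, ih]

lemma wordExp_iterExp_comm (u v : List A) (k : ℕ) (G : List A → List A → ℝ) :
    wordExp θ P u (fun x => iterExp θ P k v (G x)) =
      iterExp θ P k v (fun y => wordExp θ P u (fun x => G x y)) := by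
  simp only [wordExp, iterExp, mul_sum]
  rw [sum_comm]
  exact sum_congr rfl fun _ _ => sum_congr rfl fun _ _ => by ring

lemma iterExp_append (k : ℕ) (u u' : List A) (F : List A → ℝ) :
    iterExp θ P k (u ++ u') F =
      iterExp θ P k u (fun s => iterExp θ P k u' (fun t => F (s ++ t))) := by
  induction k generalizing u u' F with
  | zero => simp [iterExp_zero]
  | succ k ih => simp only [iterExp_succ, wordExp_append, ih, wordExp_iterExp_comm]

lemma iterExp_one_singleton (a : A) (F : List A → ℝ) :
    iterExp θ P 1 [a] F = ∑ s ∈ θ a, P a s * F s := by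
  simp [iterExp_succ 0, wordExp_cons, wordExp_nil, iterExp_zero]

lemma iterExp_add_fun (k : ℕ) (u : List A) (F G : List A → ℝ) :
    iterExp θ P k u (fun x => F x + G x) = iterExp θ P k u F + iterExp θ P k u G := by
  simp only [iterExp, mul_add, sum_add_distrib]

lemma iterExp_mono (hP : ∀ a w, 0 ≤ P a w) (k : ℕ) (u : List A) {F G : List A → ℝ}
    (h : ∀ w ∈ realsIter θ k u, F w ≤ G w) : iterExp θ P k u F ≤ iterExp θ P k u G :=
  sum_le_sum fun w hw => mul_le_mul_of_nonneg_left (h w hw) (iterProb_nonneg hP k u w)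

lemma iterExp_congr (k : ℕ) (u : List A) {F G : List A → ℝ}
    (h : ∀ w ∈ realsIter θ k u, F w = G w) : iterExp θ P k u F = iterExp θ P k u G :=
  sum_congr rfl fun w hw => by rw [h w hw]

lemma wordExp_const (hPsum : ∀ a, ∑ w ∈ θ a, P a w = 1) (u : List A) (c : ℝ) :
    wordExp θ P u (fun _ => c) = c := by
  induction u with
  | nil => exact wordExp_nil _
  | cons a u ih => rw [wordExp_cons, ih, ← sum_mul, hPsum, one_mul]

lemma iterExp_const (hPsum : ∀ a, ∑ w ∈ θ a, P a w = 1) (k : ℕ) (u : List A) (c : ℝ) :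
    iterExp θ P k u (fun _ => c) = c := by
  induction k generalizing u with
  | zero => exact iterExp_zero _ _
  | succ k ih => simp only [iterExp_succ, ih, wordExp_const hPsum]

lemma sum_iterProb (hPsum : ∀ a, ∑ w ∈ θ a, P a w = 1) (k : ℕ) (u : List A) :
    ∑ w ∈ realsIter θ k u, iterProb θ P k u w = 1 := by
  simpa [iterExp] using iterExp_const hPsum k u 1

lemma iterProb_eq_iterExp (k : ℕ) (u w : List A) :
    iterProb θ P k u w = iterExp θ P k u (fun x => if x = w then 1 else 0) := by
  simp only [iterExp, mul_ite, mul_one, mul_zero, sum_ite_eq']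
  split_ifs with hw
  · rfl
  · exact iterProb_eq_zero hw

lemma iterProb_add (k n : ℕ) (u w : List A) :
    iterProb θ P (k + n) u w =
      ∑ v ∈ realsIter θ k u, iterProb θ P k u v * iterProb θ P n v w := by
  rw [iterProb_eq_iterExp, iterExp_add]
  exact sum_congr rfl fun v _ => by rw [iterProb_eq_iterExp n]

lemma iterProb_append (k : ℕ) (u u' w : List A) :
    iterProb θ P k (u ++ u') w = ∑ z ∈ realsIter θ k u ×ˢ realsIter θ k u' with z.1 ++ z.2 = w,
      iterProb θ P k u z.1 * iterProb θ P k u' z.2 := by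
  rw [iterProb_eq_iterExp, iterExp_append, sum_filter, sum_product]
  simp only [iterExp, mul_sum, mul_ite, mul_one, mul_zero]

/-! ### Entropy of finite distributions -/

lemma negMulLog_add_lt {x y : ℝ} (hx : 0 < x) (hy : 0 < y) :
    negMulLog (x + y) < negMulLog x + negMulLog y := by
  have hlx : log x < log (x + y) := log_lt_log hx (by linarith)
  have hly : log y < log (x + y) := log_lt_log hy (by linarith)
  simp only [negMulLog]
  nlinarith [mul_lt_mul_of_pos_left hlx hx, mul_lt_mul_of_pos_left hly hy]

lemma negMulLog_add_le {x y : ℝ} (hx : 0 ≤ x) (hy : 0 ≤ y) :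
    negMulLog (x + y) ≤ negMulLog x + negMulLog y := by
  rcases hx.eq_or_lt with rfl | hx
  · simp
  rcases hy.eq_or_lt with rfl | hy
  · simp
  exact (negMulLog_add_lt hx hy).le

lemma negMulLog_sum_le {ι : Type*} {s : Finset ι} {f : ι → ℝ} (hf : ∀ i ∈ s, 0 ≤ f i) :
    negMulLog (∑ i ∈ s, f i) ≤ ∑ i ∈ s, negMulLog (f i) :=
  le_sum_of_subadditive_on_pred negMulLog (0 ≤ ·) negMulLog_zero.le
    (fun _ _ => negMulLog_add_le) (fun _ _ => add_nonneg) f hf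

lemma negMulLog_sum_eq_iff {ι : Type*} {s : Finset ι} {f : ι → ℝ} (hf : ∀ i ∈ s, 0 ≤ f i) :
    negMulLog (∑ i ∈ s, f i) = ∑ i ∈ s, negMulLog (f i) ↔
      ∀ i ∈ s, ∀ j ∈ s, 0 < f i → 0 < f j → i = j := by
  classical
  constructor
  · intro heq i hi j hj hfi hfj
    by_contra hij
    have hrest : 0 < ∑ l ∈ s.erase i, f l := lt_of_lt_of_le hfj
      (single_le_sum (fun l hl => hf l (mem_of_mem_erase hl)) (mem_erase.2 ⟨Ne.symm hij, hj⟩))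
    refine heq.not_lt ?_
    rw [← add_sum_erase s f hi, ← add_sum_erase s _ hi]
    calc negMulLog (f i + ∑ l ∈ s.erase i, f l)
        < negMulLog (f i) + negMulLog (∑ l ∈ s.erase i, f l) := negMulLog_add_lt hfi hrest
      _ ≤ negMulLog (f i) + ∑ l ∈ s.erase i, negMulLog (f l) := by
        gcongr
        exact negMulLog_sum_le fun l hl => hf l (mem_of_mem_erase hl)
  · intro h
    by_cases hex : ∃ i ∈ s, 0 < f i
    · obtain ⟨i, hi, hfi⟩ := hex
      have hzero : ∀ j ∈ s, j ≠ i → f j = 0 := fun j hj hji =>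
        ((hf j hj).eq_or_lt.resolve_right fun hfj => hji (h j hj i hi hfj hfi)).symm
      rw [sum_eq_single_of_mem i hi hzero,
        sum_eq_single_of_mem i hi fun j hj hji => by rw [hzero j hj hji, negMulLog_zero]]
    · have hzero : ∀ i ∈ s, f i = 0 := fun i hi =>
        ((hf i hi).eq_or_lt.resolve_right fun hfi => hex ⟨i, hi, hfi⟩).symm
      rw [sum_eq_zero hzero, sum_eq_zero fun i hi => by rw [hzero i hi, negMulLog_zero],
        negMulLog_zero]

lemma sum_negMulLog_fiberwise_le {ι κ : Type*} [DecidableEq κ] {s : Finset ι} {t : Finset κ}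
    {g : ι → κ} (hg : ∀ i ∈ s, g i ∈ t) {p : ι → ℝ} (hp : ∀ i ∈ s, 0 ≤ p i) :
    ∑ j ∈ t, negMulLog (∑ i ∈ s with g i = j, p i) ≤ ∑ i ∈ s, negMulLog (p i) := by
  rw [← sum_fiberwise_of_maps_to hg]
  exact sum_le_sum fun j _ => negMulLog_sum_le fun i hi => hp i (mem_filter.1 hi).1

lemma sum_negMulLog_fiberwise_eq_iff {ι κ : Type*} [DecidableEq κ] {s : Finset ι}
    {t : Finset κ} {g : ι → κ} (hg : ∀ i ∈ s, g i ∈ t) {p : ι → ℝ} (hp : ∀ i ∈ s, 0 ≤ p i) :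
    ∑ j ∈ t, negMulLog (∑ i ∈ s with g i = j, p i) = ∑ i ∈ s, negMulLog (p i) ↔
      ∀ i ∈ s, ∀ i' ∈ s, 0 < p i → 0 < p i' → g i = g i' → i = i' := by
  have hfib : ∀ j, ∀ i ∈ s.filter (g · = j), 0 ≤ p i := fun j i hi => hp i (mem_filter.1 hi).1
  rw [← sum_fiberwise_of_maps_to hg,
    sum_eq_sum_iff_of_le fun j _ => negMulLog_sum_le (hfib j)]
  simp only [negMulLog_sum_eq_iff (hfib _), mem_filter]
  constructor
  · intro h i hi i' hi' hpi hpi' hgi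
    exact h (g i) (hg i hi) i ⟨hi, rfl⟩ i' ⟨hi', hgi.symm⟩ hpi hpi'
  · rintro h j - i ⟨hi, rfl⟩ i' ⟨hi', hgi'⟩ hpi hpi'
    exact h i hi i' hi' hpi hpi' hgi'.symm

lemma sum_negMulLog_const_mul {κ : Type*} {t : Finset κ} {q : κ → ℝ}
    (hq : ∑ j ∈ t, q j = 1) (x : ℝ) :
    ∑ j ∈ t, negMulLog (x * q j) = negMulLog x + x * ∑ j ∈ t, negMulLog (q j) := by
  simp only [negMulLog_mul, sum_add_distrib, ← sum_mul, ← mul_sum, hq, one_mul]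

lemma sum_filter_product_snd {α β M : Type*} [DecidableEq β] [AddCommMonoid M] {S : Finset α}
    {W : Finset β} {w : β} (hw : w ∈ W) (f : α × β → M) :
    ∑ z ∈ S ×ˢ W with z.2 = w, f z = ∑ v ∈ S, f (v, w) := by
  rw [sum_filter, sum_product]
  exact sum_congr rfl fun v _ => by rw [sum_ite_eq' W w, if_pos hw]

lemma sum_negMulLog_product_mul {α β : Type*} {S : Finset α} {W : Finset β} {p : α → ℝ}
    {q : α → β → ℝ} (hq : ∀ v ∈ S, ∑ w ∈ W, q v w = 1) :
    ∑ z ∈ S ×ˢ W, negMulLog (p z.1 * q z.1 z.2) =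
      ∑ v ∈ S, negMulLog (p v) + ∑ v ∈ S, p v * ∑ w ∈ W, negMulLog (q v w) := by
  rw [sum_product, ← sum_add_distrib]
  exact sum_congr rfl fun v hv => sum_negMulLog_const_mul (hq v hv) (p v)

section Mixture

variable {α β : Type*} [DecidableEq β] {S : Finset α} {W : Finset β} {p : α → ℝ}
  {q : α → β → ℝ}

lemma sum_negMulLog_mixture_eq_fiberwise :
    ∑ w ∈ W, negMulLog (∑ v ∈ S, p v * q v w) =
      ∑ w ∈ W, negMulLog (∑ z ∈ S ×ˢ W with z.2 = w, p z.1 * q z.1 z.2) :=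
  sum_congr rfl fun w hw => by rw [sum_filter_product_snd hw]

/-- The chain rule `H(Y) ≤ H(X) + H(Y | X)` for `P[X = v, Y = w] = p v * q v w`. -/
lemma sum_negMulLog_mixture_le (hp : ∀ v ∈ S, 0 ≤ p v) (hq : ∀ v ∈ S, ∀ w ∈ W, 0 ≤ q v w)
    (hq1 : ∀ v ∈ S, ∑ w ∈ W, q v w = 1) :
    ∑ w ∈ W, negMulLog (∑ v ∈ S, p v * q v w) ≤
      ∑ v ∈ S, negMulLog (p v) + ∑ v ∈ S, p v * ∑ w ∈ W, negMulLog (q v w) := by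
  rw [← sum_negMulLog_product_mul hq1, sum_negMulLog_mixture_eq_fiberwise]
  exact sum_negMulLog_fiberwise_le (fun z hz => (mem_product.1 hz).2) fun z hz =>
    mul_nonneg (hp _ (mem_product.1 hz).1) (hq _ (mem_product.1 hz).1 _ (mem_product.1 hz).2)

lemma sum_negMulLog_mixture_eq_iff (hp : ∀ v ∈ S, 0 ≤ p v)
    (hq : ∀ v ∈ S, ∀ w ∈ W, 0 ≤ q v w) (hq1 : ∀ v ∈ S, ∑ w ∈ W, q v w = 1) :
    ∑ w ∈ W, negMulLog (∑ v ∈ S, p v * q v w) =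
        ∑ v ∈ S, negMulLog (p v) + ∑ v ∈ S, p v * ∑ w ∈ W, negMulLog (q v w) ↔
      ∀ v ∈ S, ∀ v' ∈ S, ∀ w ∈ W, 0 < p v * q v w → 0 < p v' * q v' w → v = v' := by
  rw [← sum_negMulLog_product_mul hq1, sum_negMulLog_mixture_eq_fiberwise,
    sum_negMulLog_fiberwise_eq_iff (fun z hz => (mem_product.1 hz).2) fun z hz =>
      mul_nonneg (hp _ (mem_product.1 hz).1) (hq _ (mem_product.1 hz).1 _ (mem_product.1 hz).2)]
  constructor
  · intro h v hv v' hv' w hw hpos hpos'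
    exact congrArg Prod.fst (h (v, w) (mem_product.2 ⟨hv, hw⟩) (v', w)
      (mem_product.2 ⟨hv', hw⟩) hpos hpos' rfl)
  · rintro h ⟨v, w⟩ hz ⟨v', w'⟩ hz' hpos hpos' (rfl : w = w')
    rw [h v (mem_product.1 hz).1 v' (mem_product.1 hz').1 w (mem_product.1 hz).2 hpos hpos']

end Mixture

/-! ### Entropy of inflation words -/

-- `Hvec θ P m a` is definitionally `iterEntropy θ P m [a]`.
noncomputable def iterEntropy (θ : A → Finset (List A)) (P : A → List A → ℝ) (m : ℕ)
    (u : List A) : ℝ :=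
  ∑ w ∈ realsIter θ m u, negMulLog (iterProb θ P m u w)

lemma iterEntropy_nil (m : ℕ) : iterEntropy θ P m [] = 0 := by
  simp [iterEntropy, realsIter_nil, iterProb_nil]

lemma sum_negMulLog_iterProb_mul (hPsum : ∀ a, ∑ w ∈ θ a, P a w = 1) (m : ℕ)
    (u u' : List A) :
    ∑ z ∈ realsIter θ m u ×ˢ realsIter θ m u',
        negMulLog (iterProb θ P m u z.1 * iterProb θ P m u' z.2) =
      iterEntropy θ P m u + iterEntropy θ P m u' := by
  rw [sum_negMulLog_product_mul (q := fun _ => iterProb θ P m u') fun _ _ =>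
    sum_iterProb hPsum m u', ← sum_mul, sum_iterProb hPsum m u, one_mul]
  rfl

lemma iterEntropy_append_eq_fiberwise (m : ℕ) (u u' : List A) :
    iterEntropy θ P m (u ++ u') = ∑ w ∈ realsIter θ m (u ++ u'), negMulLog
      (∑ z ∈ realsIter θ m u ×ˢ realsIter θ m u' with z.1 ++ z.2 = w,
        iterProb θ P m u z.1 * iterProb θ P m u' z.2) :=
  sum_congr rfl fun w _ => by rw [iterProb_append]

lemma iterEntropy_append_le (hP : ∀ a w, 0 ≤ P a w) (hPsum : ∀ a, ∑ w ∈ θ a, P a w = 1)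
    (m : ℕ) (u u' : List A) :
    iterEntropy θ P m (u ++ u') ≤ iterEntropy θ P m u + iterEntropy θ P m u' := by
  rw [iterEntropy_append_eq_fiberwise, ← sum_negMulLog_iterProb_mul hPsum]
  exact sum_negMulLog_fiberwise_le
    (fun z hz => append_mem_realsIter (mem_product.1 hz).1 (mem_product.1 hz).2)
    fun z _ => mul_nonneg (iterProb_nonneg hP m u z.1) (iterProb_nonneg hP m u' z.2)

lemma iterEntropy_append (hP : ∀ a w, 0 ≤ P a w) (hPsum : ∀ a, ∑ w ∈ θ a, P a w = 1)
    (hU : UniqueRealisationPaths θ) {u u' : List A} (hL : Legal θ (u ++ u')) (m : ℕ) :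
    iterEntropy θ P m (u ++ u') = iterEntropy θ P m u + iterEntropy θ P m u' := by
  rw [iterEntropy_append_eq_fiberwise, ← sum_negMulLog_iterProb_mul hPsum]
  refine (sum_negMulLog_fiberwise_eq_iff
    (fun z hz => append_mem_realsIter (mem_product.1 hz).1 (mem_product.1 hz).2)
    fun z _ => mul_nonneg (iterProb_nonneg hP m u z.1) (iterProb_nonneg hP m u' z.2)).2 ?_
  rintro ⟨s, t⟩ hz ⟨s', t'⟩ hz' - - h
  rw [mem_product] at hz hz'
  obtain ⟨rfl, rfl⟩ := hU.append_inj hL m hz.1 hz'.1 hz.2 hz'.2 h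
  rfl

lemma iterEntropy_le_sum_map (hP : ∀ a w, 0 ≤ P a w) (hPsum : ∀ a, ∑ w ∈ θ a, P a w = 1)
    (m : ℕ) (u : List A) : iterEntropy θ P m u ≤ (u.map (Hvec θ P m)).sum := by
  induction u with
  | nil => simp [iterEntropy_nil]
  | cons a u ih =>
    calc iterEntropy θ P m ([a] ++ u) ≤ Hvec θ P m a + iterEntropy θ P m u :=
          iterEntropy_append_le hP hPsum m [a] u
      _ ≤ ((a :: u).map (Hvec θ P m)).sum := by simpa using ih

lemma iterEntropy_eq_sum_map (hP : ∀ a w, 0 ≤ P a w) (hPsum : ∀ a, ∑ w ∈ θ a, P a w = 1)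
    (hU : UniqueRealisationPaths θ) (m : ℕ) {u : List A} (hL : Legal θ u) :
    iterEntropy θ P m u = (u.map (Hvec θ P m)).sum := by
  induction u with
  | nil => simp [iterEntropy_nil]
  | cons a u ih =>
    rw [← List.singleton_append] at hL ⊢
    rw [iterEntropy_append hP hPsum hU hL, ih (hL.of_infix (List.suffix_append _ _).isInfix)]
    rfl

lemma sum_iterProb_of_subset (hPsum : ∀ a, ∑ w ∈ θ a, P a w = 1) {n : ℕ} {v : List A}
    {W : Finset (List A)} (hW : realsIter θ n v ⊆ W) : ∑ w ∈ W, iterProb θ P n v w = 1 := by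
  rw [← sum_subset hW fun w _ hw => iterProb_eq_zero hw, sum_iterProb hPsum]

lemma iterEntropy_eq_sum_of_subset {n : ℕ} {v : List A} {W : Finset (List A)}
    (hW : realsIter θ n v ⊆ W) :
    iterEntropy θ P n v = ∑ w ∈ W, negMulLog (iterProb θ P n v w) :=
  sum_subset hW fun w _ hw => by rw [iterProb_eq_zero hw, negMulLog_zero]

lemma iterEntropy_add_eq_mixture (k n : ℕ) (u : List A) :
    iterEntropy θ P (k + n) u = ∑ w ∈ realsIter θ (k + n) u,
      negMulLog (∑ v ∈ realsIter θ k u, iterProb θ P k u v * iterProb θ P n v w) :=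
  sum_congr rfl fun w _ => by rw [iterProb_add]

lemma iterExp_iterEntropy_eq_mixture (k n : ℕ) (u : List A) :
    iterExp θ P k u (iterEntropy θ P n) = ∑ v ∈ realsIter θ k u,
      iterProb θ P k u v * ∑ w ∈ realsIter θ (k + n) u, negMulLog (iterProb θ P n v w) :=
  sum_congr rfl fun _ hv => by rw [iterEntropy_eq_sum_of_subset (realsIter_subset_add hv)]

lemma iterEntropy_add_le (hP : ∀ a w, 0 ≤ P a w) (hPsum : ∀ a, ∑ w ∈ θ a, P a w = 1)
    (k n : ℕ) (u : List A) :
    iterEntropy θ P (k + n) u ≤ iterEntropy θ P k u + iterExp θ P k u (iterEntropy θ P n) := by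
  rw [iterEntropy_add_eq_mixture, iterExp_iterEntropy_eq_mixture]
  exact sum_negMulLog_mixture_le (fun _ _ => iterProb_nonneg hP _ _ _)
    (fun _ _ _ _ => iterProb_nonneg hP _ _ _)
    fun _ hv => sum_iterProb_of_subset hPsum (realsIter_subset_add hv)

lemma iterEntropy_add_eq_iff (hP : ∀ a w, 0 ≤ P a w) (hPsum : ∀ a, ∑ w ∈ θ a, P a w = 1)
    (k n : ℕ) (u : List A) :
    iterEntropy θ P (k + n) u = iterEntropy θ P k u + iterExp θ P k u (iterEntropy θ P n) ↔
      ∀ v₁ v₂ w : List A, v₁ ∈ realsIter θ k u → v₂ ∈ realsIter θ k u →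
        0 < iterProb θ P k u v₁ * iterProb θ P n v₁ w →
          0 < iterProb θ P k u v₂ * iterProb θ P n v₂ w → v₁ = v₂ := by
  rw [iterEntropy_add_eq_mixture, iterExp_iterEntropy_eq_mixture, iterEntropy,
    sum_negMulLog_mixture_eq_iff (p := iterProb θ P k u) (q := iterProb θ P n)
      (fun _ _ => iterProb_nonneg hP _ _ _)
      (fun _ _ _ _ => iterProb_nonneg hP _ _ _)
      fun _ hv => sum_iterProb_of_subset hPsum (realsIter_subset_add hv)]
  refine ⟨fun h v₁ v₂ w hv₁ hv₂ hpos₁ hpos₂ => h v₁ hv₁ v₂ hv₂ w ?_ hpos₁ hpos₂,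
    fun h v₁ hv₁ v₂ hv₂ w _ => h v₁ v₂ w hv₁ hv₂⟩
  exact realsIter_subset_add hv₁
    (mem_realsIter_of_iterProb_ne_zero (right_ne_zero_of_mul hpos₁.ne'))

/-! ### The substitution matrix -/

lemma iterExp_sum_map (hPsum : ∀ a, ∑ w ∈ θ a, P a w = 1) (k : ℕ) (f : A → ℝ) (u : List A) :
    iterExp θ P k u (fun v => (v.map f).sum) =
      (u.map fun c => iterExp θ P k [c] (fun v => (v.map f).sum)).sum := by
  induction u with
  | nil => simp [iterExp_nil]
  | cons a u ih =>
    rw [← List.singleton_append, iterExp_append]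
    simp only [List.map_append, List.sum_append, iterExp_add_fun, iterExp_const hPsum, ih]
    simp

section Matrix

variable [Fintype A]

lemma sum_count_mul_eq_sum_map (f : A → ℝ) (l : List A) :
    ∑ b, (l.count b : ℝ) * f b = (l.map f).sum := by
  rw [sum_list_map_count, eq_comm]
  refine (sum_subset (subset_univ _) fun b _ hb => ?_).trans
    (sum_congr rfl fun b _ => nsmul_eq_mul _ _)
  rw [List.count_eq_zero_of_not_mem (by simpa using hb), zero_smul]

lemma sum_mul_sum_map_eq_vecMul (f : A → ℝ) (a : A) :
    ∑ s ∈ θ a, P a s * (s.map f).sum = (f ᵥ* substM θ P) a := by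
  simp only [Matrix.vecMul, dotProduct, substM, Matrix.of_apply, mul_sum]
  rw [sum_comm]
  refine sum_congr rfl fun s _ => ?_
  rw [← sum_count_mul_eq_sum_map, mul_sum]
  exact sum_congr rfl fun b _ => by ring

lemma iterExp_sum_map_eq_vecMul (hPsum : ∀ a, ∑ w ∈ θ a, P a w = 1) (k : ℕ) (f : A → ℝ)
    (a : A) : iterExp θ P k [a] (fun v => (v.map f).sum) = (f ᵥ* substM θ P ^ k) a := by
  induction k generalizing f with
  | zero => simp [iterExp_zero]
  | succ k ih =>
    rw [iterExp_add, pow_succ', ← Matrix.vecMul_vecMul, ← ih]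
    refine iterExp_congr k [a] fun v _ => ?_
    simp only [iterExp_sum_map hPsum 1 f v, iterExp_one_singleton, sum_mul_sum_map_eq_vecMul]

lemma pow_mulVec_of_mulVec_eq_smul {M : Matrix A A ℝ} {lam : ℝ} {R : A → ℝ}
    (hR : M *ᵥ R = lam • R) (k : ℕ) : (M ^ k) *ᵥ R = lam ^ k • R := by
  induction k with
  | zero => simp
  | succ k ih =>
    rw [pow_succ, ← mulVec_mulVec, hR, mulVec_smul, ih, smul_smul, pow_succ']

lemma vecMul_pow_dotProduct {M : Matrix A A ℝ} {lam : ℝ} {R : A → ℝ}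
    (hR : M *ᵥ R = lam • R) (k : ℕ) (v : A → ℝ) : (v ᵥ* M ^ k) ⬝ᵥ R = lam ^ k * (v ⬝ᵥ R) := by
  rw [← dotProduct_mulVec, pow_mulVec_of_mulVec_eq_smul hR, dotProduct_smul, smul_eq_mul]

lemma iterExp_iterEntropy_le (hP : ∀ a w, 0 ≤ P a w) (hPsum : ∀ a, ∑ w ∈ θ a, P a w = 1)
    (k n : ℕ) (a : A) :
    iterExp θ P k [a] (iterEntropy θ P n) ≤ (Hvec θ P n ᵥ* substM θ P ^ k) a :=
  (iterExp_mono hP k [a] fun v _ => iterEntropy_le_sum_map hP hPsum n v).trans_eq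
    (iterExp_sum_map_eq_vecMul hPsum k _ a)

lemma iterExp_iterEntropy_eq (hP : ∀ a w, 0 ≤ P a w) (hPsum : ∀ a, ∑ w ∈ θ a, P a w = 1)
    (hU : UniqueRealisationPaths θ) (k n : ℕ) (a : A) :
    iterExp θ P k [a] (iterEntropy θ P n) = (Hvec θ P n ᵥ* substM θ P ^ k) a :=
  (iterExp_congr k [a] fun _ hv =>
    iterEntropy_eq_sum_map hP hPsum hU n (legal_of_mem_realsIter hv)).trans
    (iterExp_sum_map_eq_vecMul hPsum k _ a)

lemma exists_mem_of_isPrimitive (hθ : ∀ a, (θ a).Nonempty) (hne : ∀ a, ∀ w ∈ θ a, w ≠ [])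
    (hprim : IsPrimitive θ P) (b : A) : ∃ c, ∃ s ∈ θ c, b ∈ s := by
  by_contra hb
  simp only [not_exists, not_and] at hb
  obtain ⟨k, hk⟩ := hprim
  cases k with
  | zero =>
    obtain ⟨s, hs⟩ := hθ b
    obtain ⟨x, hx⟩ := List.exists_mem_of_ne_nil s (hne b s hs)
    obtain rfl : x = b := by
      by_contra hxb
      simpa [one_apply, hxb] using hk x b
    exact hb x s hs hx
  | succ k =>
    have hrow : ∀ c, substM θ P b c = 0 := fun c => sum_eq_zero fun s hs => by
      rw [List.count_eq_zero_of_not_mem (hb c s hs), Nat.cast_zero, mul_zero]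
    simpa [pow_succ', mul_apply, hrow] using hk b b

end Matrix

/-! ### Merging realisations -/

def Merges (θ : A → Finset (List A)) (m j : ℕ) : Prop :=
  ∃ (a : A) (u v w : List A), u ∈ realsIter θ m [a] ∧ v ∈ realsIter θ m [a] ∧ u ≠ v ∧
    w ∈ realsIter θ j u ∧ w ∈ realsIter θ j v

lemma forall_determinedBy_iff_not_merges (hP : ∀ a w, 0 ≤ P a w)
    (hPpos : ∀ a, ∀ w ∈ θ a, 0 < P a w) {m j : ℕ} :
    (∀ a, DeterminedBy θ P a m j) ↔ ¬ Merges θ m j := by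
  constructor
  · rintro hdet ⟨a, u, v, w, hu, hv, huv, hwu, hwv⟩
    exact huv (hdet a u v w hu hv
      (mul_pos (iterProb_pos hP hPpos hu) (iterProb_pos hP hPpos hwu))
      (mul_pos (iterProb_pos hP hPpos hv) (iterProb_pos hP hPpos hwv)))
  · intro h a v₁ v₂ w hv₁ hv₂ hpos₁ hpos₂
    by_contra hne
    exact h ⟨a, v₁, v₂, w, hv₁, hv₂, hne,
      mem_realsIter_of_iterProb_ne_zero (right_ne_zero_of_mul hpos₁.ne'),
      mem_realsIter_of_iterProb_ne_zero (right_ne_zero_of_mul hpos₂.ne')⟩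

namespace Merges

variable {m j : ℕ}

lemma mono_right (hθ : ∀ a, (θ a).Nonempty) (h : Merges θ m j) {j' : ℕ} (hj : j ≤ j') :
    Merges θ m j' := by
  obtain ⟨a, u, v, w, hu, hv, huv, hwu, hwv⟩ := h
  obtain ⟨w', hw'⟩ := realsIter_nonempty hθ (j' - j) w
  have hj' : j + (j' - j) = j' := by omega
  exact ⟨a, u, v, w', hu, hv, huv, hj' ▸ mem_realsIter_add.2 ⟨w, hwu, hw'⟩,
    hj' ▸ mem_realsIter_add.2 ⟨w, hwv, hw'⟩⟩

/-- A merging below `a` is pushed one level down inside any `ϑ(c)` in which `a` occurs. -/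
lemma succ_left (hθ : ∀ a, (θ a).Nonempty) (hocc : ∀ b, ∃ c, ∃ s ∈ θ c, b ∈ s)
    (h : Merges θ m j) : Merges θ (m + 1) j := by
  obtain ⟨a, u, v, w, hu, hv, huv, hwu, hwv⟩ := h
  obtain ⟨c, s, hs, has⟩ := hocc a
  obtain ⟨s₁, s₂, rfl⟩ := List.append_of_mem has
  obtain ⟨x, hx⟩ := realsIter_nonempty hθ m s₁
  obtain ⟨y, hy⟩ := realsIter_nonempty hθ m s₂
  obtain ⟨x', hx'⟩ := realsIter_nonempty hθ j x
  obtain ⟨y', hy'⟩ := realsIter_nonempty hθ j y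
  have hlift : ∀ z ∈ realsIter θ m [a], x ++ (z ++ y) ∈ realsIter θ (m + 1) [c] := fun z hz =>
    Nat.add_comm 1 m ▸ mem_realsIter_add.2 ⟨_, mem_realsIter_one_singleton.2 hs,
      append_mem_realsIter hx (append_mem_realsIter hz hy)⟩
  exact ⟨c, x ++ (u ++ y), x ++ (v ++ y), x' ++ (w ++ y'), hlift u hu, hlift v hv,
    fun h => huv (by simpa using h), append_mem_realsIter hx' (append_mem_realsIter hwu hy'),
    append_mem_realsIter hx' (append_mem_realsIter hwv hy')⟩

lemma mono_left (hθ : ∀ a, (θ a).Nonempty) (hocc : ∀ b, ∃ c, ∃ s ∈ θ c, b ∈ s)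
    (h : Merges θ m j) {m' : ℕ} (hm : m ≤ m') : Merges θ m' j := by
  induction m', hm using Nat.le_induction with
  | base => exact h
  | succ m' _ ih => exact ih.succ_left hθ hocc

lemma shift (h : Merges θ m (j + 1)) : Merges θ (m + 1) j ∨ Merges θ m 1 := by
  obtain ⟨a, u, v, w, hu, hv, huv, hwu, hwv⟩ := h
  rw [Nat.add_comm, mem_realsIter_add] at hwu hwv
  obtain ⟨u', hu', hwu'⟩ := hwu
  obtain ⟨v', hv', hwv'⟩ := hwv
  by_cases h : u' = v'
  · subst h
    exact .inr ⟨a, u, v, u', hu, hv, huv, hu', hv'⟩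
  · exact .inl ⟨a, u', v', w, mem_realsIter_add.2 ⟨u, hu, hu'⟩, mem_realsIter_add.2 ⟨v, hv, hv'⟩,
      h, hwu', hwv'⟩

/-- Unique realisation paths split the common descendant letter by letter. -/
lemma eq_of_not_merges_one (hU : UniqueRealisationPaths θ) (hj : ¬ Merges θ 1 j)
    {p : List A} (hp : Legal θ p) {u v w : List A} (hu : u ∈ realsIter θ 1 p)
    (hv : v ∈ realsIter θ 1 p) (hwu : w ∈ realsIter θ j u) (hwv : w ∈ realsIter θ j v) :
    u = v := by
  induction p generalizing u v w with
  | nil => simp_all [realsIter_nil]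
  | cons a p ih =>
    rw [← List.singleton_append] at hp hu hv
    obtain ⟨s, hs, t, ht, rfl⟩ := mem_realsIter_append.1 hu
    obtain ⟨s', hs', t', ht', rfl⟩ := mem_realsIter_append.1 hv
    obtain ⟨x, hx, y, hy, rfl⟩ := mem_realsIter_append.1 hwu
    obtain ⟨x', hx', y', hy', hxy⟩ := mem_realsIter_append.1 hwv
    obtain ⟨rfl, rfl⟩ := hU.append_inj hp (1 + j) (mem_realsIter_add.2 ⟨s, hs, hx⟩)
      (mem_realsIter_add.2 ⟨s', hs', hx'⟩) (mem_realsIter_add.2 ⟨t, ht, hy⟩)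
      (mem_realsIter_add.2 ⟨t', ht', hy'⟩) hxy
    have hss' : s = s' := by
      by_contra hne
      exact hj ⟨a, s, s', x, hs, hs', hne, hx, hx'⟩
    rw [hss', ih (hp.of_infix (List.suffix_append _ _).isInfix) ht ht' hy hy']

lemma unshift (hU : UniqueRealisationPaths θ) (h : Merges θ (m + 1) j) :
    Merges θ m (j + 1) ∨ Merges θ 1 j := by
  obtain ⟨a, u, v, w, hu, hv, huv, hwu, hwv⟩ := h
  obtain ⟨pu, hpu, hu₁⟩ := mem_realsIter_add.1 hu
  obtain ⟨pv, hpv, hv₁⟩ := mem_realsIter_add.1 hv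
  by_cases hp : pu = pv
  · subst hp
    refine .inr (by_contra fun hj => huv ?_)
    exact eq_of_not_merges_one hU hj (legal_of_mem_realsIter hpu) hu₁ hv₁ hwu hwv
  · exact .inl ⟨a, pu, pv, w, hpu, hpv, hp, Nat.add_comm 1 j ▸ mem_realsIter_add.2 ⟨u, hu₁, hwu⟩,
      Nat.add_comm 1 j ▸ mem_realsIter_add.2 ⟨v, hv₁, hwv⟩⟩

end Merges

lemma merges_iff_merges_one (hθ : ∀ a, (θ a).Nonempty) (hocc : ∀ b, ∃ c, ∃ s ∈ θ c, b ∈ s)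
    (hU : UniqueRealisationPaths θ) (m j : ℕ) :
    Merges θ (m + 1) (j + 1) ↔ Merges θ 1 (m + j + 1) := by
  induction m generalizing j with
  | zero => simp only [Nat.zero_add]
  | succ m ih =>
    have hdepth : m + 1 + j + 1 = m + (j + 1) + 1 := by omega
    rw [hdepth, ← ih]
    constructor
    · intro h
      rcases h.unshift hU with h | h
      · exact h
      · exact (h.mono_left hθ hocc (by omega)).mono_right hθ (by omega)
    · intro h
      rcases h.shift with h | h
      · exact h
      · exact (h.mono_left hθ hocc (by omega)).mono_right hθ (by omega)

lemma merges_comm (hθ : ∀ a, (θ a).Nonempty) (hocc : ∀ b, ∃ c, ∃ s ∈ θ c, b ∈ s)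
    (hU : UniqueRealisationPaths θ) {m j : ℕ} (hm : 1 ≤ m) (hj : 1 ≤ j) :
    Merges θ m j ↔ Merges θ j m := by
  obtain ⟨m, rfl⟩ : ∃ m', m = m' + 1 := ⟨m - 1, by omega⟩
  obtain ⟨j, rfl⟩ : ∃ j', j = j' + 1 := ⟨j - 1, by omega⟩
  rw [merges_iff_merges_one hθ hocc hU m j, merges_iff_merges_one hθ hocc hU j m, Nat.add_comm m j]

theorem statement9_general {A : Type*} [Fintype A] [DecidableEq A]
    (θ : A → Finset (List A)) (P : A → List A → ℝ) (lam : ℝ) (R : A → ℝ)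
    (hRS : IsRandomSubstitution θ P) (hprim : IsPrimitive θ P)
    (hRpos : ∀ a, 0 < R a)
    (hEig : (substM θ P).mulVec R = lam • R) :
    ∀ n k : ℕ, 1 ≤ n → 1 ≤ k →
      (∀ a : A, Hvec θ P (n + k) a ≤
          (∑ b, Hvec θ P n b * (substM θ P ^ k) b a) + Hvec θ P k a) ∧
        HdotR θ P R (n + k) ≤ lam ^ k * HdotR θ P R n + HdotR θ P R k ∧
        (UniqueRealisationPaths θ →
          ((∀ a : A, Hvec θ P (n + k) a =
              (∑ b, Hvec θ P n b * (substM θ P ^ k) b a) + Hvec θ P k a) ↔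
            ∀ a : A, DeterminedBy θ P a n k)) := by
  have hP := hRS.nonneg
  obtain ⟨hθ, hne, hPpos, -, hPsum⟩ := hRS
  intro n k hn hk
  have hle : ∀ a, Hvec θ P (n + k) a ≤ (Hvec θ P n ᵥ* substM θ P ^ k) a + Hvec θ P k a := by
    intro a
    rw [Nat.add_comm n k, add_comm _ (Hvec θ P k a)]
    exact (iterEntropy_add_le hP hPsum k n [a]).trans
      (add_le_add le_rfl (iterExp_iterEntropy_le hP hPsum k n a))
  refine ⟨hle, ?_, fun hU => ?_⟩
  · calc HdotR θ P R (n + k) ≤ (Hvec θ P n ᵥ* substM θ P ^ k + Hvec θ P k) ⬝ᵥ R :=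
          dotProduct_le_dotProduct_of_nonneg_right hle fun a => (hRpos a).le
      _ = lam ^ k * HdotR θ P R n + HdotR θ P R k := by
          rw [add_dotProduct, vecMul_pow_dotProduct hEig]
          rfl
  · have hocc := exists_mem_of_isPrimitive hθ hne hprim
    calc (∀ a, Hvec θ P (n + k) a = (Hvec θ P n ᵥ* substM θ P ^ k) a + Hvec θ P k a)
        ↔ ∀ a, DeterminedBy θ P a k n := forall_congr' fun a => by
          rw [← iterExp_iterEntropy_eq hP hPsum hU, add_comm _ (Hvec θ P k a), Nat.add_comm n k]
          exact iterEntropy_add_eq_iff hP hPsum k n [a]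
      _ ↔ ∀ a, DeterminedBy θ P a n k := by
          rw [forall_determinedBy_iff_not_merges hP hPpos,
            forall_determinedBy_iff_not_merges hP hPpos, merges_comm hθ hocc hU hk hn]

theorem statement9 {A : Type*} [Fintype A] [DecidableEq A]
    (θ : A → Finset (List A)) (P : A → List A → ℝ) (lam : ℝ) (R : A → ℝ)
    (hRS : IsRandomSubstitution θ P) (hprim : IsPrimitive θ P) (hlam : 1 < lam)
    (hRpos : ∀ a, 0 < R a) (hRsum : ∑ a, R a = 1)
    (hEig : (substM θ P).mulVec R = lam • R) :
    ∀ n k : ℕ, 1 ≤ n → 1 ≤ k →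
      (∀ a : A, Hvec θ P (n + k) a ≤
          (∑ b, Hvec θ P n b * (substM θ P ^ k) b a) + Hvec θ P k a) ∧
        HdotR θ P R (n + k) ≤ lam ^ k * HdotR θ P R n + HdotR θ P R k ∧
        (UniqueRealisationPaths θ →
          ((∀ a : A, Hvec θ P (n + k) a =
              (∑ b, Hvec θ P n b * (substM θ P ^ k) b a) + Hvec θ P k a) ↔
            ∀ a : A, DeterminedBy θ P a n k)) :=
  statement9_general θ P lam R hRS hprim hRpos hEig

end RandomSubstitutionTheory
end

section
/- Let ϑ_P = (ϑ, P) be a primitive random substitution over an alphabet A such that |ϑ(a)| (the common length of words in ϑ(a)) is well-defined for all a ∈ A. If ϑ_P is recognisable, then there exists a smallest natural number κ(ϑ), the recognisability radius of ϑ, with the following property: if x ∈ ϑ([a]) for some a ∈ A and y ∈ X_ϑ satisfies x_{[−κ(ϑ), κ(ϑ)]} = y_{[−κ(ϑ), κ(ϑ)]}, then y ∈ ϑ([a]). -/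
open Filter MeasureTheory

/- A compactness argument. If no radius worked, there would be `x_n ∈ ϑ([a_n])` and
`y_n ∈ X_ϑ ∖ ϑ([a_n])` agreeing on `[-n, n]`. Along an ultrafilter all the data (the `y_n`, the
preimages of the `x_n`, the recognisability decompositions of the `y_n`) converge pointwise, and
the limit `w` of the `y_n` receives two decompositions: one with offset `0` from the `x_n`, one
from the `y_n`. Uniqueness of the decomposition of `w` forces the `y_n` to have offset `0` and
to come from a sequence starting with `a_n`, i.e. `y_n ∈ ϑ([a_n])`, for many `n`. -/

theorem Ultrafilter.exists_eventually_eq_of_mem_finite {ι β : Type*} (U : Ultrafilter ι)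
    {S : Set β} (hS : S.Finite) {f : ι → β} (hf : ∀ i, f i ∈ S) :
    ∃ b, ∀ᶠ i in U, f i = b :=
  ((U.eventually_exists_mem_iff hS).1 (Eventually.of_forall fun i => ⟨f i, hf i, rfl⟩)).imp
    fun _ h => h.2

theorem Ultrafilter.exists_forall_eventually_eq {ι κ β : Type*} [Finite β]
    (U : Ultrafilter ι) (f : ι → κ → β) : ∃ g : κ → β, ∀ k, ∀ᶠ i in U, f i k = g k := by
  choose g hg using fun k => U.exists_eventually_eq_of_mem_finite Set.finite_univ
    (f := (f · k)) fun _ => Set.mem_univ _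
  exact ⟨g, hg⟩

namespace RandomSubstitutionTheory

variable {A : Type*}

lemma substSeqPow_one (θ : A → Finset (List A)) (y : ℤ → A) :
    substSeqPow θ 1 y = substSeq θ y := by
  simp [substSeqPow]

lemma mem_inflCylPow_one [DecidableEq A] {θ : A → Finset (List A)} {a : A} {x : ℤ → A} :
    x ∈ inflCylPow θ 1 a ↔ ∃ z, (z ∈ Xtheta θ ∧ z 0 = a) ∧ x ∈ substSeq θ z := by
  simp only [inflCylPow, Set.mem_iUnion, substSeqPow_one, Set.mem_sep_iff, exists_prop]

lemma IsRandomSubstitution.maxLen_pos {θ : A → Finset (List A)} {P : A → List A → ℝ}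
    (hRS : IsRandomSubstitution θ P) (a : A) : 0 < maxLen θ a := by
  obtain ⟨u, hu⟩ := hRS.1 a
  exact (List.length_pos_iff.2 (hRS.2.1 a u hu)).trans_le (Finset.le_sup hu)

section UltrafilterLimits

variable {ι : Type*} {U : Ultrafilter ι}

theorem mem_Xtheta_of_eventually_eq [DecidableEq A] {θ : A → Finset (List A)}
    {z : ι → ℤ → A} {zl : ℤ → A} (hz : ∀ t, ∀ᶠ i in U, z i t = zl t)
    (hX : ∀ i, z i ∈ Xtheta θ) : zl ∈ Xtheta θ := by
  intro m n
  obtain ⟨i, hi⟩ := (eventually_all.2 fun t : Fin n => hz (m + (t : ℕ))).exists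
  have hwin : window zl m n = window (z i) m n := List.map_congr_left fun t ht => by
    obtain ⟨s, hs, rfl⟩ : ∃ s < n, t = s := by simpa using ht
    exact (hi ⟨s, hs⟩).symm
  rw [hwin]
  exact hX i m n

theorem exists_eventually_eq_of_increments {ℓ : ι → ℤ → ℕ} {ℓl : ℤ → ℕ}
    (hℓ : ∀ j, ∀ᶠ i in U, ℓ i j = ℓl j) {p : ι → ℤ → ℤ} (hp0 : ∀ i, p i 0 = 0)
    (hp : ∀ i j, p i (j + 1) = p i j + ℓ i j) : ∃ pl : ℤ → ℤ, ∀ j, ∀ᶠ i in U, p i j = pl j := by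
  suffices h : ∀ j, ∃ c, ∀ᶠ i in U, p i j = c by
    choose pl hpl using h
    exact ⟨pl, hpl⟩
  intro j
  induction j using Int.induction_on with
  | zero => exact ⟨0, Eventually.of_forall hp0⟩
  | succ j ih =>
    obtain ⟨c, hc⟩ := ih
    refine ⟨c + ℓl j, ?_⟩
    filter_upwards [hc, hℓ j] with i h1 h2
    rw [hp, h1, h2]
  | pred j ih =>
    obtain ⟨c, hc⟩ := ih
    refine ⟨c - ℓl (-j - 1), ?_⟩
    filter_upwards [hc, hℓ (-j - 1)] with i h1 h2
    have h3 := hp i (-j - 1)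
    rw [sub_add_cancel, h2] at h3
    omega

theorem mem_substSeq_of_eventually_eq [Finite A] {θ : A → Finset (List A)} {z x : ι → ℤ → A}
    {zl xl : ℤ → A} (hz : ∀ t, ∀ᶠ i in U, z i t = zl t) (hx : ∀ t, ∀ᶠ i in U, x i t = xl t)
    (hmem : ∀ i, x i ∈ substSeq θ (z i)) : xl ∈ substSeq θ zl := by
  choose v hv p hp0 hp hval using hmem
  obtain ⟨vl, hvl⟩ : ∃ vl : ℤ → List A, ∀ j, ∀ᶠ i in U, v i j = vl j := by
    choose vl hvl using fun j => U.exists_eventually_eq_of_mem_finite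
      (Set.finite_iUnion fun a => (θ a).finite_toSet) (f := (v · j))
      fun i => Set.mem_iUnion.2 ⟨_, hv i j⟩
    exact ⟨vl, hvl⟩
  obtain ⟨pl, hpl⟩ := exists_eventually_eq_of_increments
    (fun j => (hvl j).mono fun i h => congrArg List.length h) hp0 hp
  refine ⟨vl, fun j => ?_, pl, ?_, fun j => ?_, fun j t ht => ?_⟩
  · obtain ⟨i, h1, h2⟩ := ((hvl j).and (hz j)).exists
    rw [← h1, ← h2]
    exact hv i j
  · obtain ⟨i, h⟩ := (hpl 0).exists
    rw [← h]
    exact hp0 i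
  · obtain ⟨i, h1, h2, h3⟩ := ((hpl (j + 1)).and ((hpl j).and (hvl j))).exists
    rw [← h1, ← h2, ← h3]
    exact hp i j
  · obtain ⟨i, h1, h2, h3⟩ := ((hpl j).and ((hvl j).and (hx (pl j + t)))).exists
    rw [← h3, ← h1, hval i j t (h2 ▸ ht)]
    simp only [List.get_eq_getElem, h2]

theorem eventually_mem_inflCylPow_one [Finite A] [DecidableEq A] {θ : A → Finset (List A)}
    (hrec : Recognisable θ) (hpos : ∀ a, 0 < maxLen θ a) {y : ι → ℤ → A}
    (hy : ∀ i, y i ∈ Xtheta θ) {w z : ℤ → A}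
    (hw : ∀ t, ∀ᶠ i in U, y i t = w t) (hz : z ∈ Xtheta θ) (hwz : w ∈ substSeq θ z) :
    ∀ᶠ i in U, y i ∈ inflCylPow θ 1 (z 0) := by
  choose d hdX hdk hds using fun i => (hrec (y i) (hy i)).exists
  obtain ⟨zd, hzd⟩ := U.exists_forall_eventually_eq fun i => (d i).1
  obtain ⟨k, hk⟩ := U.exists_eventually_eq_of_mem_finite
    (Set.finite_iUnion fun b => Set.finite_Iio (maxLen θ b)) (f := fun i => (d i).2)
    fun i => Set.mem_iUnion.2 ⟨_, hdk i⟩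
  have hwk : (fun t => w (t - k)) ∈ substSeq θ zd := by
    refine mem_substSeq_of_eventually_eq hzd (fun t => ?_) hds
    filter_upwards [hk, hw (t - k)] with i h1 h2
    rw [h1]
    exact h2
  have hk_lt : k < maxLen θ (zd 0) := by
    obtain ⟨i, h1, h2⟩ := (hk.and (hzd 0)).exists
    rw [← h1, ← h2]
    exact hdk i
  obtain ⟨rfl, rfl⟩ := Prod.mk.inj <| (hrec w (mem_Xtheta_of_eventually_eq hw hy)).unique
    ⟨mem_Xtheta_of_eventually_eq hzd hdX, hk_lt, hwk⟩ ⟨hz, hpos _, by simpa using hwz⟩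
  filter_upwards [hk, hzd 0] with i hki hzi
  exact mem_inflCylPow_one.2 ⟨(d i).1, ⟨hdX i, hzi⟩, by simpa [hki] using hds i⟩

end UltrafilterLimits

theorem exists_recogPropPow_one [Finite A] [DecidableEq A] {θ : A → Finset (List A)}
    (hrec : Recognisable θ) (hpos : ∀ a, 0 < maxLen θ a) : ∃ r, RecogPropPow θ 1 r := by
  by_contra! h
  simp only [RecogPropPow, not_forall] at h
  choose a x hx y hyX hagree hy using h
  choose z hz hxz using fun n => mem_inflCylPow_one.1 (hx n)
  let U := Ultrafilter.of (cofinite : Filter ℕ)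
  obtain ⟨w, hw⟩ := U.exists_forall_eventually_eq y
  obtain ⟨zl, hzl⟩ := U.exists_forall_eventually_eq z
  have hxw : ∀ t, ∀ᶠ n in U, x n t = w t := fun t => by
    have hlarge : ∀ᶠ n in U, t.natAbs ≤ n :=
      Ultrafilter.of_le _ (Nat.cofinite_eq_atTop ▸ eventually_ge_atTop t.natAbs)
    filter_upwards [hw t, hlarge] with n hn hle
    rw [← hn]
    exact hagree n t (by omega) (by omega)
  obtain ⟨n, hyn, hzn⟩ := ((eventually_mem_inflCylPow_one hrec hpos hyX hw
    (mem_Xtheta_of_eventually_eq hzl fun n => (hz n).1)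
    (mem_substSeq_of_eventually_eq hzl hxw hxz)).and (hzl 0)).exists
  rw [← hzn, (hz n).2] at hyn
  exact hy n hyn

theorem statement14_general {A : Type*} [Fintype A] [DecidableEq A]
    (θ : A → Finset (List A)) (P : A → List A → ℝ)
    (hRS : IsRandomSubstitution θ P)
    (hrec : Recognisable θ) :
    ∃ κ : ℕ, IsLeast {r : ℕ | RecogPropPow θ 1 r} κ :=
  ⟨_, Nat.sInf_mem (exists_recogPropPow_one hrec hRS.maxLen_pos), fun _ hr => Nat.sInf_le hr⟩

theorem statement14 {A : Type*} [Fintype A] [DecidableEq A]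
    (θ : A → Finset (List A)) (P : A → List A → ℝ)
    (hRS : IsRandomSubstitution θ P) (hprim : IsPrimitive θ P) (hexp : IsExpanding θ P)
    (hlen : ∀ a : A, ∀ u ∈ θ a, ∀ v ∈ θ a, u.length = v.length)
    (hrec : Recognisable θ) :
    ∃ κ : ℕ, IsLeast {r : ℕ | RecogPropPow θ 1 r} κ :=
  statement14_general θ P hRS hrec

end RandomSubstitutionTheory
end
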